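/- For all compositions α of n ≥ 1 and β of m ≥ 1, the source ribbon Schur functions in noncommuting variables satisfy r_{[α]} · r_{[β]} = r_{[α·β]} + r_{[α⊙β]} in F = FreeAlgebra ℚ (Fin N), where α·β = (α_1, …, α_k, β_1, …, β_p) is the concatenation and α⊙β = (α_1, …, α_{k−1}, α_k + β_1, β_2, …, β_p) is the near concatenation of the compositions. -/

import Mathlib

open scoped BigOperators Classical

noncomputable section

namespace NCSymPaper

/-- `π` is a set partition of `{0, …, n-1}` (representing `[n] = {1, …, n}`):
its blocks are nonempty and every element lies in exactly one block. -/
def IsSetPartition {n : ℕ} (π : Finset (Finset (Fin n))) : Prop :=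
  (∀ B ∈ π, B.Nonempty) ∧ ∀ j : Fin n, ∃! B, B ∈ π ∧ j ∈ B

/-- `j` and `k` lie in a common block of `π`. -/
def sameBlock {n : ℕ} (π : Finset (Finset (Fin n))) (j k : Fin n) : Prop :=
  ∃ B ∈ π, j ∈ B ∧ k ∈ B

/-- The noncommutative monomial `x_{f 1} x_{f 2} ⋯ x_{f n}` in `FreeAlgebra ℚ (Fin N)`. -/
def ncMonomial {N n : ℕ} (f : Fin n → Fin N) : FreeAlgebra ℚ (Fin N) :=
  (List.ofFn fun j => FreeAlgebra.ι ℚ (f j)).prod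

/-- `η` maps every block of `π` to itself. -/
def fixesBlocks {n : ℕ} (π : Finset (Finset (Fin n))) (η : Equiv.Perm (Fin n)) : Prop :=
  ∀ B ∈ π, ∀ j ∈ B, η j ∈ B

/-- The complete homogeneous symmetric function in noncommuting variables `h_π`. -/
def hNC (N : ℕ) {n : ℕ} (π : Finset (Finset (Fin n))) : FreeAlgebra ℚ (Fin N) :=
  ∑ η ∈ Finset.univ.filter (fixesBlocks π),
    ∑ f ∈ Finset.univ.filter (fun f : Fin n → Fin N =>
        ∀ j k : Fin n, j < k → sameBlock π j k → f j ≤ f k),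
      ncMonomial fun j => f (η j)

/-- The monomial symmetric function in noncommuting variables `m_σ`. -/
def mNC (N : ℕ) {n : ℕ} (σ : Finset (Finset (Fin n))) : FreeAlgebra ℚ (Fin N) :=
  ∑ f ∈ Finset.univ.filter (fun f : Fin n → Fin N =>
      ∀ j k : Fin n, f j = f k ↔ sameBlock σ j k),
    ncMonomial f

/-- The elementary symmetric function in noncommuting variables `e_π`. -/
def eNC (N : ℕ) {n : ℕ} (π : Finset (Finset (Fin n))) : FreeAlgebra ℚ (Fin N) :=
  ∑ f ∈ Finset.univ.filter (fun f : Fin n → Fin N =>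
      ∀ j k : Fin n, j ≠ k → sameBlock π j k → f j ≠ f k),
    ncMonomial f

/-- `lam` is an integer partition (weakly decreasing list of positive integers). -/
def IsPartitionList (lam : List ℕ) : Prop :=
  List.Pairwise (· ≥ ·) lam ∧ ∀ x ∈ lam, 0 < x

/-- The entry `β(ε)_i = λ_i − μ_{ε(i)} + ε(i) − i` (0-indexed; `μ_j = 0` beyond `ℓ(μ)`). -/
def betaInt (lam mu : List ℕ) (ε : Equiv.Perm (Fin lam.length)) (i : Fin lam.length) : ℤ :=
  (lam.get i : ℤ) - (mu.getD (ε i : ℕ) 0 : ℤ) + ((ε i : ℕ) : ℤ) - ((i : ℕ) : ℤ)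

/-- The set partition of `[n]` into consecutive intervals of sizes `b 0, b 1, …`
(sizes equal to `0` contribute no block). -/
def intervalBlocks (n : ℕ) {l : ℕ} (b : Fin l → ℕ) : Finset (Finset (Fin n)) :=
  ((Finset.univ : Finset (Fin l)).image fun i =>
      (Finset.univ : Finset (Fin n)).filter fun k : Fin n =>
        (∑ j ∈ Finset.univ.filter fun j => j < i, b j) ≤ (k : ℕ) ∧
          (k : ℕ) < (∑ j ∈ Finset.univ.filter fun j => j < i, b j) + b i).filter
    fun B => B.Nonempty

/-- The image of a set partition under a map `δ` (blockwise image). -/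
def applyMap {n : ℕ} (δ : Fin n → Fin n) (π : Finset (Finset (Fin n))) :
    Finset (Finset (Fin n)) :=
  π.image fun B => B.image δ

/-- The skew Schur function in noncommuting variables
`s_{(δ, λ/μ)} = Σ_ε sgn(ε) (1/β(ε)!) h_{δ[β(ε)]}`, the summand being `0`
whenever some entry of `β(ε)` is negative. -/
def sNC (N n : ℕ) (δ : Fin n → Fin n) (lam mu : List ℕ) : FreeAlgebra ℚ (Fin N) :=
  ∑ ε : Equiv.Perm (Fin lam.length),
    if ∀ i, 0 ≤ betaInt lam mu ε i then
      (((Equiv.Perm.sign ε : ℤ) : ℚ) *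
          ∏ i, 1 / ((betaInt lam mu ε i).toNat.factorial : ℚ)) •
        hNC N (applyMap δ (intervalBlocks n fun i => (betaInt lam mu ε i).toNat))
    else 0

/-- Analogue of `sNC` with `e`'s in place of `h`'s (used for transposed Schur functions). -/
def sNCe (N n : ℕ) (δ : Fin n → Fin n) (lam mu : List ℕ) : FreeAlgebra ℚ (Fin N) :=
  ∑ ε : Equiv.Perm (Fin lam.length),
    if ∀ i, 0 ≤ betaInt lam mu ε i then
      (((Equiv.Perm.sign ε : ℤ) : ℚ) *
          ∏ i, 1 / ((betaInt lam mu ε i).toNat.factorial : ℚ)) •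
        eNC N (applyMap δ (intervalBlocks n fun i => (betaInt lam mu ε i).toNat))
    else 0

/-- The projection `ρ` letting the variables commute. -/
def rho (N : ℕ) : FreeAlgebra ℚ (Fin N) →ₐ[ℚ] MvPolynomial (Fin N) ℚ :=
  FreeAlgebra.lift ℚ MvPolynomial.X

/-- The complete homogeneous symmetric polynomial of degree `k` in `N` commuting
variables (`1` for `k = 0`, `0` for `k < 0`). -/
def hPoly (N : ℕ) (k : ℤ) : MvPolynomial (Fin N) ℚ :=
  if 0 ≤ k then
    ∑ f ∈ Finset.univ.filter fun f : Fin k.toNat → Fin N => Monotone f,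
      ∏ j, MvPolynomial.X (f j)
  else 0

/-- The skew Schur polynomial `s_{λ/μ} = det(h_{λ_i − μ_j − i + j})`. -/
def schurPoly (N : ℕ) (lam mu : List ℕ) : MvPolynomial (Fin N) ℚ :=
  Matrix.det (Matrix.of fun i j : Fin lam.length =>
    hPoly N ((lam.get i : ℤ) - (mu.getD (j : ℕ) 0 : ℤ) - ((i : ℕ) : ℤ) + ((j : ℕ) : ℤ)))

/-- Order on blocks: weakly decreasing size, ties broken by increasing least element. -/
def blockLe {n : ℕ} (B C : Finset (Fin n)) : Bool :=
  decide (C.card < B.card ∨ (B.card = C.card ∧ B.min ≤ C.min))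

/-- The blocks of `π`, listed in weakly decreasing size with ties broken by
increasing least element. -/
def sortedBlocks {n : ℕ} (π : Finset (Finset (Fin n))) : List (Finset (Fin n)) :=
  π.toList.mergeSort blockLe

/-- The one-line notation of `δ_π`. -/
def oneLine {n : ℕ} (π : Finset (Finset (Fin n))) : List (Fin n) :=
  ((sortedBlocks π).map fun B => B.sort (· ≤ ·)).flatten

/-- The permutation `δ_π` (as a function). -/
def deltaPi {n : ℕ} (π : Finset (Finset (Fin n))) : Fin n → Fin n :=
  fun i => (oneLine π).getD (i : ℕ) i

/-- `λ(π)`: the weakly decreasing list of block sizes of `π`. -/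
def lamOf {n : ℕ} (π : Finset (Finset (Fin n))) : List ℕ :=
  (sortedBlocks π).map Finset.card

/-- The standard Schur function in noncommuting variables `s_π = s_{(δ_π, λ(π))}`. -/
def sPi (N : ℕ) {n : ℕ} (π : Finset (Finset (Fin n))) : FreeAlgebra ℚ (Fin N) :=
  sNC N n (deltaPi π) (lamOf π) []

/-- The transposed standard Schur function in noncommuting variables `s^t_π`. -/
def sPiT (N : ℕ) {n : ℕ} (π : Finset (Finset (Fin n))) : FreeAlgebra ℚ (Fin N) :=
  sNCe N n (deltaPi π) (lamOf π) []

/-- The transpose of an integer partition: `(λ^t)_i = #{j : λ_j ≥ i}`. -/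
def transposeList (lam : List ℕ) : List ℕ :=
  (List.range (lam.foldr max 0)).map fun i => (lam.filter fun x => i + 1 ≤ x).length

/-- The weakly decreasing list of parts of a `Nat.Partition`. -/
def nuList {n : ℕ} (ν : Nat.Partition n) : List ℕ :=
  (Multiset.sort ν.parts (· ≤ ·)).reverse

/-- The cells of the skew diagram `λ/μ` in reading order (0-indexed pairs (row, column)). -/
def cellL (lam mu : List ℕ) : List (ℕ × ℕ) :=
  (List.range lam.length).flatMap fun i =>
    ((List.range (lam.getD i 0)).drop (mu.getD i 0)).map fun j => (i, j)

/-- The `a`-th cell of `λ/μ` in reading order. -/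
def cellOf (lam mu : List ℕ) (a : ℕ) : ℕ × ℕ :=
  (cellL lam mu).getD a (0, 0)

/-- `T` (a filling of the cells of `λ/μ`, listed in reading order) is a semistandard
Young tableau: rows weakly increase left to right, columns strictly increase
top to bottom. -/
def IsSSYT {N n : ℕ} (lam mu : List ℕ) (T : Fin n → Fin N) : Prop :=
  ∀ a b : Fin n,
    ((cellOf lam mu a).1 = (cellOf lam mu b).1 ∧
        (cellOf lam mu b).2 = (cellOf lam mu a).2 + 1 → T a ≤ T b) ∧
    ((cellOf lam mu b).1 = (cellOf lam mu a).1 + 1 ∧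
        (cellOf lam mu b).2 = (cellOf lam mu a).2 → T a < T b)

/-- The Rosas–Sagan skew Schur function `S_{λ/μ}`. -/
def RSschur (N n : ℕ) (lam mu : List ℕ) : FreeAlgebra ℚ (Fin N) :=
  ∑ δ : Equiv.Perm (Fin n),
    ∑ T ∈ Finset.univ.filter fun T : Fin n → Fin N => IsSSYT lam mu T,
      ncMonomial fun k => T (δ k)

/-- The Kostka number `K_ν^{λ/μ}`: the number of semistandard Young tableaux of shape
`λ/μ` in which the entry `i` occurs exactly `ν_i` times (all entries of such a
tableau necessarily lie in `{1, …, n}` where `n = |λ/μ|`). -/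
def kostka (n : ℕ) (lam mu nu : List ℕ) : ℕ :=
  (Finset.univ.filter fun T : Fin n → Fin n =>
      IsSSYT lam mu T ∧
        ∀ i : Fin n, (Finset.univ.filter fun a : Fin n => T a = i).card = nu.getD (i : ℕ) 0).card

/-- The outer shape of the ribbon diagram of a composition `α`:
`λ_k = α_k` and `λ_i = α_i + λ_{i+1} − 1`. -/
def ribbonOuter : List ℕ → List ℕ
  | [] => []
  | a :: rest =>
    match ribbonOuter rest with
    | [] => [a]
    | b :: t => (a + b - 1) :: b :: t

/-- The inner shape of the ribbon diagram of `α`: `μ_i = λ_{i+1} − 1`, `μ_k = 0`. -/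
def ribbonInner (α : List ℕ) : List ℕ :=
  (ribbonOuter α).tail.map (· - 1)

/-- The source ribbon Schur function in noncommuting variables `r_{[α]}`. -/
def ribbonNC (N n : ℕ) (α : List ℕ) : FreeAlgebra ℚ (Fin N) :=
  sNC N n id (ribbonOuter α) (ribbonInner α)

/-! ### Auxiliary development -/

/-- Offset of the `i`-th interval block. -/
def off {l : ℕ} (b : Fin l → ℕ) (i : Fin l) : ℕ :=
  ∑ j ∈ Finset.univ.filter (fun j => j < i), b j

def blk (n : ℕ) {l : ℕ} (b : Fin l → ℕ) (i : Fin l) : Finset (Fin n) :=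
  Finset.univ.filter fun k : Fin n => off b i ≤ (k : ℕ) ∧ (k : ℕ) < off b i + b i

lemma intervalBlocks_eq (n : ℕ) {l : ℕ} (b : Fin l → ℕ) :
    intervalBlocks n b = ((Finset.univ : Finset (Fin l)).image (blk n b)).filter
      (fun B => B.Nonempty) := rfl

lemma off_zero {l : ℕ} (b : Fin (l + 1) → ℕ) : off b 0 = 0 := by
  rw [off, Finset.sum_eq_zero_iff]
  intro j hj
  simp only [Finset.mem_filter] at hj
  exact absurd hj.2 (by simp [Fin.lt_iff_val_lt_val])

lemma off_succ {l : ℕ} (b : Fin (l + 1) → ℕ) (i : Fin l) :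
    off b i.succ = b 0 + off (fun j => b j.succ) i := by
  rw [off, off, Finset.sum_filter, Finset.sum_filter, Fin.sum_univ_succ]
  congr 1
  · simp [Fin.lt_iff_val_lt_val, -Fin.val_fin_lt]

lemma off_add_le {l : ℕ} (b : Fin l → ℕ) (i : Fin l) :
    off b i + b i ≤ ∑ j, b j := by
  have h : off b i + b i = ∑ j ∈ insert i (Finset.univ.filter (fun j => j < i)), b j := by
    rw [Finset.sum_insert (by simp)]
    rw [off]; ring
  rw [h]
  exact Finset.sum_le_sum_of_subset (Finset.subset_univ _)

lemma off_cover {l : ℕ} (b : Fin l → ℕ) (x : ℕ) (hx : x < ∑ j, b j) :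
    ∃ i, off b i ≤ x ∧ x < off b i + b i := by
  induction l generalizing x with
  | zero => simp at hx
  | succ l ih =>
    by_cases h : x < b 0
    · exact ⟨0, by simp [off_zero], by simpa [off_zero] using h⟩
    · push_neg at h
      have hx' : x - b 0 < ∑ j : Fin l, b j.succ := by
        rw [Fin.sum_univ_succ] at hx
        omega
      obtain ⟨i, h1, h2⟩ := ih (fun j => b j.succ) (x - b 0) hx'
      refine ⟨i.succ, ?_, ?_⟩ <;> rw [off_succ] <;> omega
lemma mem_blk {n l : ℕ} (b : Fin l → ℕ) (i : Fin l) (j : Fin n) :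
    j ∈ blk n b i ↔ off b i ≤ (j : ℕ) ∧ (j : ℕ) < off b i + b i := by
  simp [blk]

lemma mem_intervalBlocks {n l : ℕ} (b : Fin l → ℕ) (B : Finset (Fin n)) :
    B ∈ intervalBlocks n b ↔ (∃ i, blk n b i = B) ∧ B.Nonempty := by
  rw [intervalBlocks_eq]
  simp

lemma fixesBlocks_intervalBlocks_iff {n l : ℕ} (b : Fin l → ℕ) (η : Equiv.Perm (Fin n)) :
    fixesBlocks (intervalBlocks n b) η ↔
      ∀ (i : Fin l) (j : Fin n), off b i ≤ (j : ℕ) → (j : ℕ) < off b i + b i →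
        off b i ≤ (η j : ℕ) ∧ (η j : ℕ) < off b i + b i := by
  constructor
  · intro H i j h1 h2
    have hBmem : blk n b i ∈ intervalBlocks n b := by
      rw [mem_intervalBlocks]
      exact ⟨⟨i, rfl⟩, ⟨j, (mem_blk b i j).2 ⟨h1, h2⟩⟩⟩
    have := H _ hBmem j ((mem_blk b i j).2 ⟨h1, h2⟩)
    exact (mem_blk b i _).1 this
  · intro H B hB j hj
    obtain ⟨⟨i, rfl⟩, -⟩ := (mem_intervalBlocks b B).1 hB
    obtain ⟨h1, h2⟩ := (mem_blk b i j).1 hj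
    exact (mem_blk b i _).2 (H i j h1 h2)

lemma sameBlock_intervalBlocks_iff {n l : ℕ} (b : Fin l → ℕ) (j k : Fin n) :
    sameBlock (intervalBlocks n b) j k ↔
      ∃ i : Fin l, (off b i ≤ (j : ℕ) ∧ (j : ℕ) < off b i + b i) ∧
        (off b i ≤ (k : ℕ) ∧ (k : ℕ) < off b i + b i) := by
  constructor
  · rintro ⟨B, hB, hjB, hkB⟩
    obtain ⟨⟨i, rfl⟩, -⟩ := (mem_intervalBlocks b B).1 hB
    exact ⟨i, (mem_blk b i j).1 hjB, (mem_blk b i k).1 hkB⟩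
  · rintro ⟨i, hj, hk⟩
    refine ⟨blk n b i, ?_, (mem_blk b i j).2 hj, (mem_blk b i k).2 hk⟩
    rw [mem_intervalBlocks]
    exact ⟨⟨i, rfl⟩, ⟨j, (mem_blk b i j).2 hj⟩⟩
/-- The full homogeneous function `h_k` (single block of size `k`). -/
def hFull (N k : ℕ) : FreeAlgebra ℚ (Fin N) :=
  ∑ η : Equiv.Perm (Fin k),
    ∑ f ∈ Finset.univ.filter (fun f : Fin k → Fin N =>
        ∀ j j' : Fin k, j < j' → f j ≤ f j'),
      ncMonomial fun j => f (η j)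

def permJoin {k r : ℕ} (p : Equiv.Perm (Fin k)) (q : Equiv.Perm (Fin r)) :
    Equiv.Perm (Fin (k + r)) :=
  finSumFinEquiv.symm.trans ((Equiv.sumCongr p q).trans finSumFinEquiv)

lemma permJoin_castAdd {k r : ℕ} (p : Equiv.Perm (Fin k)) (q : Equiv.Perm (Fin r))
    (i : Fin k) : permJoin p q (Fin.castAdd r i) = Fin.castAdd r (p i) := by
  simp [permJoin, finSumFinEquiv_symm_apply_castAdd]

lemma permJoin_natAdd {k r : ℕ} (p : Equiv.Perm (Fin k)) (q : Equiv.Perm (Fin r))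
    (i : Fin r) : permJoin p q (Fin.natAdd k i) = Fin.natAdd k (q i) := by
  simp [permJoin, finSumFinEquiv_symm_apply_natAdd]

lemma eq_castAdd {k r : ℕ} (j : Fin (k + r)) (h : (j : ℕ) < k) :
    j = Fin.castAdd r ⟨(j : ℕ), h⟩ := Fin.ext rfl

lemma eq_natAdd {k r : ℕ} (j : Fin (k + r)) (h : k ≤ (j : ℕ)) :
    j = Fin.natAdd k ⟨(j : ℕ) - k, by omega⟩ := Fin.ext (by simp; omega)

lemma permJoin_apply_lt {k r : ℕ} (p : Equiv.Perm (Fin k)) (q : Equiv.Perm (Fin r))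
    (j : Fin (k + r)) (h : (j : ℕ) < k) :
    (permJoin p q j : ℕ) = (p ⟨(j : ℕ), h⟩ : ℕ) := by
  conv_lhs => rw [eq_castAdd j h]
  rw [permJoin_castAdd]; simp

lemma permJoin_apply_ge {k r : ℕ} (p : Equiv.Perm (Fin k)) (q : Equiv.Perm (Fin r))
    (j : Fin (k + r)) (h : k ≤ (j : ℕ)) :
    (permJoin p q j : ℕ) = k + (q ⟨(j : ℕ) - k, by omega⟩ : ℕ) := by
  conv_lhs => rw [eq_natAdd j h]
  rw [permJoin_natAdd]; simp

lemma permJoin_apply_ge' {k r : ℕ} (p : Equiv.Perm (Fin k)) (q : Equiv.Perm (Fin r))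
    (j : Fin (k + r)) (x : Fin r) (hx : (j : ℕ) = k + (x : ℕ)) :
    (permJoin p q j : ℕ) = k + (q x : ℕ) := by
  have hj : j = Fin.natAdd k x := Fin.ext hx
  rw [hj, permJoin_natAdd, Fin.coe_natAdd]

lemma perm_decomp {k r : ℕ} (η : Equiv.Perm (Fin (k + r)))
    (hlow : ∀ j : Fin (k + r), (j : ℕ) < k → (η j : ℕ) < k)
    (hhigh : ∀ j : Fin (k + r), k ≤ (j : ℕ) → k ≤ (η j : ℕ)) :
    ∃ (p : Equiv.Perm (Fin k)) (q : Equiv.Perm (Fin r)), η = permJoin p q := by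
  have hlow' : ∀ j : Fin (k + r), (j : ℕ) < k → (η⁻¹ j : ℕ) < k := by
    intro j hj
    by_contra hc
    push_neg at hc
    have := hhigh (η⁻¹ j) hc
    rw [Equiv.Perm.coe_inv, Equiv.apply_symm_apply] at this
    omega
  have hhigh' : ∀ j : Fin (k + r), k ≤ (j : ℕ) → k ≤ (η⁻¹ j : ℕ) := by
    intro j hj
    by_contra hc
    push_neg at hc
    have := hlow (η⁻¹ j) hc
    rw [Equiv.Perm.coe_inv, Equiv.apply_symm_apply] at this
    omega
  refine ⟨⟨fun x => ⟨(η (Fin.castAdd r x) : ℕ), hlow _ (by simp)⟩,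
           fun x => ⟨(η⁻¹ (Fin.castAdd r x) : ℕ), hlow' _ (by simp)⟩, ?_, ?_⟩,
          ⟨fun x => ⟨(η (Fin.natAdd k x) : ℕ) - k, by
              have := hhigh (Fin.natAdd k x) (by simp)
              have := (η (Fin.natAdd k x)).isLt; omega⟩,
           fun x => ⟨(η⁻¹ (Fin.natAdd k x) : ℕ) - k, by
              have := hhigh' (Fin.natAdd k x) (by simp)
              have := (η⁻¹ (Fin.natAdd k x)).isLt; omega⟩, ?_, ?_⟩, ?_⟩
  · intro x
    apply Fin.ext
    have h1 : (Fin.castAdd r (⟨(η (Fin.castAdd r x) : ℕ), hlow _ (by simp)⟩ : Fin k))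
        = η (Fin.castAdd r x) := Fin.ext rfl
    simp only [h1, Equiv.Perm.coe_inv, Equiv.symm_apply_apply, Fin.coe_castAdd]
  · intro x
    apply Fin.ext
    have h1 : (Fin.castAdd r (⟨(η⁻¹ (Fin.castAdd r x) : ℕ), hlow' _ (by simp)⟩ : Fin k))
        = η⁻¹ (Fin.castAdd r x) := Fin.ext rfl
    simp only [h1]; simp only [Equiv.Perm.coe_inv, Equiv.apply_symm_apply, Fin.coe_castAdd]
  · intro x
    apply Fin.ext
    have hge := hhigh (Fin.natAdd k x) (by simp)
    have h1 : (Fin.natAdd k (⟨(η (Fin.natAdd k x) : ℕ) - k, by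
        have := (η (Fin.natAdd k x)).isLt; omega⟩ : Fin r))
        = η (Fin.natAdd k x) := Fin.ext (by simp; omega)
    simp only [h1, Equiv.Perm.coe_inv, Equiv.symm_apply_apply, Fin.coe_natAdd]
    try omega
  · intro x
    apply Fin.ext
    have hge := hhigh' (Fin.natAdd k x) (by simp)
    have h1 : (Fin.natAdd k (⟨(η⁻¹ (Fin.natAdd k x) : ℕ) - k, by
        have := (η⁻¹ (Fin.natAdd k x)).isLt; omega⟩ : Fin r))
        = η⁻¹ (Fin.natAdd k x) := Fin.ext (by simp only [Fin.coe_natAdd]; omega)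
    simp only [h1]; simp only [Equiv.Perm.coe_inv, Equiv.apply_symm_apply, Fin.coe_natAdd]
    try omega
  · apply Equiv.ext
    intro j
    by_cases h : (j : ℕ) < k
    · apply Fin.ext
      rw [permJoin_apply_lt _ _ j h]
      show (η j : ℕ) = (η (Fin.castAdd r ⟨(j : ℕ), h⟩) : ℕ)
      rw [← eq_castAdd j h]
    · push_neg at h
      apply Fin.ext
      rw [permJoin_apply_ge _ _ j h]
      show (η j : ℕ) = k + ((η (Fin.natAdd k ⟨(j : ℕ) - k, by omega⟩) : ℕ) - k)
      rw [← eq_natAdd j h]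
      have := hhigh j h
      omega

def funJoin {N k r : ℕ} (f₁ : Fin k → Fin N) (f₂ : Fin r → Fin N) (j : Fin (k + r)) : Fin N :=
  if h : (j : ℕ) < k then f₁ ⟨(j : ℕ), h⟩ else f₂ ⟨(j : ℕ) - k, by omega⟩

lemma funJoin_castAdd {N k r : ℕ} (f₁ : Fin k → Fin N) (f₂ : Fin r → Fin N) (i : Fin k) :
    funJoin f₁ f₂ (Fin.castAdd r i) = f₁ i := by
  rw [funJoin, dif_pos (by simpa using i.isLt)]
  congr 1

lemma funJoin_natAdd {N k r : ℕ} (f₁ : Fin k → Fin N) (f₂ : Fin r → Fin N) (i : Fin r) :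
    funJoin f₁ f₂ (Fin.natAdd k i) = f₂ i := by
  rw [funJoin, dif_neg (by simp)]
  congr 1
  exact Fin.ext (by simp)

lemma ncMonomial_join {N k r : ℕ} (f₁ : Fin k → Fin N) (f₂ : Fin r → Fin N)
    (p : Equiv.Perm (Fin k)) (q : Equiv.Perm (Fin r)) :
    (ncMonomial fun j => funJoin f₁ f₂ (permJoin p q j)) =
      (ncMonomial fun j => f₁ (p j)) * ncMonomial fun j => f₂ (q j) := by
  rw [ncMonomial, List.ofFn_add, List.prod_append, ncMonomial, ncMonomial]
  congr 1
  · exact congrArg List.prod (congrArg List.ofFn (funext fun i => by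
      rw [show Fin.castLE (Nat.le_add_right k r) i = Fin.castAdd r i from rfl,
        permJoin_castAdd, funJoin_castAdd]))
  · exact congrArg List.prod (congrArg List.ofFn (funext fun i => by
      rw [permJoin_natAdd, funJoin_natAdd]))
lemma funJoin_lt {N k r : ℕ} (f₁ : Fin k → Fin N) (f₂ : Fin r → Fin N)
    (j : Fin (k + r)) (h : (j : ℕ) < k) : funJoin f₁ f₂ j = f₁ ⟨(j : ℕ), h⟩ := dif_pos h

lemma funJoin_ge {N k r : ℕ} (f₁ : Fin k → Fin N) (f₂ : Fin r → Fin N)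
    (j : Fin (k + r)) (h : k ≤ (j : ℕ)) :
    funJoin f₁ f₂ j = f₂ ⟨(j : ℕ) - k, by omega⟩ := dif_neg (by omega)

lemma inner_split (N : ℕ) {l : ℕ} (b : Fin (l + 1) → ℕ)
    (p : Equiv.Perm (Fin (b 0))) (q : Equiv.Perm (Fin (∑ j : Fin l, b j.succ))) :
    ∑ f ∈ Finset.univ.filter (fun f : Fin (b 0 + ∑ j : Fin l, b j.succ) → Fin N =>
        ∀ x y, x < y → sameBlock (intervalBlocks (b 0 + ∑ j : Fin l, b j.succ) b) x y →
          f x ≤ f y),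
      ncMonomial (fun j => f (permJoin p q j)) =
    (∑ f₁ ∈ Finset.univ.filter (fun f : Fin (b 0) → Fin N =>
        ∀ j j' : Fin (b 0), j < j' → f j ≤ f j'),
      ncMonomial fun j => f₁ (p j)) *
    ∑ f₂ ∈ Finset.univ.filter (fun f : Fin (∑ j : Fin l, b j.succ) → Fin N =>
        ∀ x y, x < y →
          sameBlock (intervalBlocks (∑ j : Fin l, b j.succ) (fun j => b j.succ)) x y →
            f x ≤ f y),
      ncMonomial fun j => f₂ (q j) := by
  classical
  rw [Finset.sum_mul_sum, ← Finset.sum_product']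
  refine (Finset.sum_bij (fun ff _ => funJoin ff.1 ff.2) ?_ ?_ ?_ ?_).symm
  · -- membership
    rintro ⟨f₁, f₂⟩ hmem
    rw [Finset.mem_product, Finset.mem_filter, Finset.mem_filter] at hmem
    obtain ⟨⟨-, h₁⟩, -, h₂⟩ := hmem
    simp only [Finset.mem_filter, Finset.mem_univ, true_and]
    intro x y hxy hsb
    rw [sameBlock_intervalBlocks_iff] at hsb
    obtain ⟨i, hxi, hyi⟩ := hsb
    induction i using Fin.cases with
    | zero =>
      rw [off_zero] at hxi hyi
      have hx : (x : ℕ) < b 0 := by omega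
      have hy : (y : ℕ) < b 0 := by omega
      rw [funJoin_lt _ _ x hx, funJoin_lt _ _ y hy]
      exact h₁ ⟨(x : ℕ), hx⟩ ⟨(y : ℕ), hy⟩ (Fin.mk_lt_mk.mpr (Fin.lt_def.1 hxy))
    | succ i' =>
      rw [off_succ] at hxi hyi
      have hx : b 0 ≤ (x : ℕ) := by omega
      have hy : b 0 ≤ (y : ℕ) := by omega
      have hxs : (x : ℕ) - b 0 < ∑ j : Fin l, b j.succ := by have := x.isLt; omega
      have hys : (y : ℕ) - b 0 < ∑ j : Fin l, b j.succ := by have := y.isLt; omega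
      rw [funJoin_ge _ _ x hx, funJoin_ge _ _ y hy]
      refine h₂ ⟨(x : ℕ) - b 0, hxs⟩ ⟨(y : ℕ) - b 0, hys⟩
        (Fin.mk_lt_mk.mpr (by have := Fin.lt_def.1 hxy; omega)) ?_
      rw [sameBlock_intervalBlocks_iff]
      refine ⟨i', ⟨?_, ?_⟩, ⟨?_, ?_⟩⟩
      · show off (fun j => b j.succ) i' ≤ (x : ℕ) - b 0; omega
      · show (x : ℕ) - b 0 < off (fun j => b j.succ) i' + b i'.succ; omega
      · show off (fun j => b j.succ) i' ≤ (y : ℕ) - b 0; omega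
      · show (y : ℕ) - b 0 < off (fun j => b j.succ) i' + b i'.succ; omega
  · -- injectivity
    rintro ⟨f₁, f₂⟩ hm1 ⟨g₁, g₂⟩ hm2 h
    replace h : funJoin f₁ f₂ = funJoin g₁ g₂ := h
    have h1 : f₁ = g₁ := by
      funext x
      have := congrFun h (Fin.castAdd _ x)
      rwa [funJoin_castAdd, funJoin_castAdd] at this
    have h2 : f₂ = g₂ := by
      funext x
      have := congrFun h (Fin.natAdd _ x)
      rwa [funJoin_natAdd, funJoin_natAdd] at this
    rw [Prod.mk.injEq]
    exact ⟨h1, h2⟩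
  · -- surjectivity
    intro f hf
    rw [Finset.mem_filter] at hf
    obtain ⟨-, hf⟩ := hf
    refine ⟨(fun x => f (Fin.castAdd _ x), fun x => f (Fin.natAdd _ x)), ?_, ?_⟩
    · rw [Finset.mem_product, Finset.mem_filter, Finset.mem_filter]
      refine ⟨⟨Finset.mem_univ _, ?_⟩, Finset.mem_univ _, ?_⟩
      · intro x y hxy
        refine hf _ _ (by rw [Fin.lt_def]; simpa using hxy) ?_
        rw [sameBlock_intervalBlocks_iff]
        have hx := x.isLt
        have hy := y.isLt
        refine ⟨0, ⟨?_, ?_⟩, ⟨?_, ?_⟩⟩ <;> rw [off_zero] <;>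
          simp only [Fin.coe_castAdd] <;> omega
      · intro x y hxy hsb
        rw [sameBlock_intervalBlocks_iff] at hsb
        obtain ⟨i, hxi, hyi⟩ := hsb
        have hlt : Fin.natAdd (b 0) x < Fin.natAdd (b 0) y := by
          rw [Fin.lt_def]
          simp only [Fin.coe_natAdd]
          exact Nat.add_lt_add_left (Fin.lt_def.1 hxy) _
        refine hf _ _ hlt ?_
        rw [sameBlock_intervalBlocks_iff]
        refine ⟨i.succ, ⟨?_, ?_⟩, ⟨?_, ?_⟩⟩ <;> rw [off_succ] <;>
          simp only [Fin.coe_natAdd] <;> omega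
    · show funJoin (fun x => f (Fin.castAdd _ x)) (fun x => f (Fin.natAdd _ x)) = f
      funext j
      by_cases h : (j : ℕ) < b 0
      · rw [funJoin_lt _ _ j h]
        exact congrArg f (eq_castAdd j h).symm
      · push_neg at h
        rw [funJoin_ge _ _ j h]
        exact congrArg f (eq_natAdd j h).symm
  · -- values
    rintro ⟨f₁, f₂⟩ hm
    exact (ncMonomial_join f₁ f₂ p q).symm
lemma hNC_split (N : ℕ) {l : ℕ} (b : Fin (l + 1) → ℕ) :
    hNC N (intervalBlocks (b 0 + ∑ j : Fin l, b j.succ) b) =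
      hFull N (b 0) *
        hNC N (intervalBlocks (∑ j : Fin l, b j.succ) (fun j => b j.succ)) := by
  classical
  rw [hNC, hNC, hFull]
  have step2 : ∀ pq : Equiv.Perm (Fin (b 0)) × Equiv.Perm (Fin (∑ j : Fin l, b j.succ)),
      (∑ f ∈ Finset.univ.filter (fun f : Fin (b 0 + ∑ j : Fin l, b j.succ) → Fin N =>
          ∀ x y, x < y → sameBlock (intervalBlocks (b 0 + ∑ j : Fin l, b j.succ) b) x y →
            f x ≤ f y),
        ncMonomial (fun j => f (permJoin pq.1 pq.2 j))) =
      (∑ f₁ ∈ Finset.univ.filter (fun f : Fin (b 0) → Fin N =>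
          ∀ j j' : Fin (b 0), j < j' → f j ≤ f j'),
        ncMonomial fun j => f₁ (pq.1 j)) *
      ∑ f₂ ∈ Finset.univ.filter (fun f : Fin (∑ j : Fin l, b j.succ) → Fin N =>
          ∀ x y, x < y →
            sameBlock (intervalBlocks (∑ j : Fin l, b j.succ) (fun j => b j.succ)) x y →
              f x ≤ f y),
        ncMonomial fun j => f₂ (pq.2 j) := fun pq => inner_split N b pq.1 pq.2
  have step1 :
      ∑ η ∈ Finset.univ.filter
          (fixesBlocks (intervalBlocks (b 0 + ∑ j : Fin l, b j.succ) b)),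
        (∑ f ∈ Finset.univ.filter (fun f : Fin (b 0 + ∑ j : Fin l, b j.succ) → Fin N =>
            ∀ x y, x < y → sameBlock (intervalBlocks (b 0 + ∑ j : Fin l, b j.succ) b) x y →
              f x ≤ f y),
          ncMonomial (fun j => f (η j))) =
      ∑ pq ∈ (Finset.univ : Finset (Equiv.Perm (Fin (b 0)))) ×ˢ
          Finset.univ.filter
            (fixesBlocks (intervalBlocks (∑ j : Fin l, b j.succ) (fun j => b j.succ))),
        (∑ f ∈ Finset.univ.filter (fun f : Fin (b 0 + ∑ j : Fin l, b j.succ) → Fin N =>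
            ∀ x y, x < y → sameBlock (intervalBlocks (b 0 + ∑ j : Fin l, b j.succ) b) x y →
              f x ≤ f y),
          ncMonomial (fun j => f (permJoin pq.1 pq.2 j))) := by
    refine (Finset.sum_bij (fun pq _ => permJoin pq.1 pq.2) ?_ ?_ ?_ ?_).symm
    · -- membership
      rintro ⟨p, q⟩ hmem
      show permJoin p q ∈ Finset.univ.filter
        (fixesBlocks (intervalBlocks (b 0 + ∑ j : Fin l, b j.succ) b))
      have hq : fixesBlocks (intervalBlocks (∑ j : Fin l, b j.succ) (fun j => b j.succ)) q :=
        (Finset.mem_filter.1 (Finset.mem_product.1 hmem).2).2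
      rw [fixesBlocks_intervalBlocks_iff] at hq
      simp only [Finset.mem_filter, Finset.mem_univ, true_and]
      rw [fixesBlocks_intervalBlocks_iff]
      intro i j h1 h2
      induction i using Fin.cases with
      | zero =>
        rw [off_zero] at h1 h2 ⊢
        have hj : (j : ℕ) < b 0 := by omega
        rw [permJoin_apply_lt p q j hj]
        have := (p ⟨(j : ℕ), hj⟩).isLt
        omega
      | succ i' =>
        rw [off_succ] at h1 h2 ⊢
        have hj : b 0 ≤ (j : ℕ) := by omega
        have hjs : (j : ℕ) - b 0 < ∑ j : Fin l, b j.succ := by have := j.isLt; omega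
        rw [permJoin_apply_ge' p q j ⟨(j : ℕ) - b 0, hjs⟩ (by
          show (j : ℕ) = b 0 + ((j : ℕ) - b 0); omega)]
        have := hq i' ⟨(j : ℕ) - b 0, hjs⟩ (by show off _ i' ≤ (j : ℕ) - b 0; omega)
          (by show (j : ℕ) - b 0 < off (fun j => b j.succ) i' + b i'.succ; omega)
        omega
    · -- injectivity
      rintro ⟨p, q⟩ hm1 ⟨p', q'⟩ hm2 h
      replace h : permJoin p q = permJoin p' q' := h
      rw [Prod.mk.injEq]
      constructor
      · apply Equiv.ext
        intro x
        have hx : ((Fin.castAdd (∑ j : Fin l, b j.succ) x : Fin (b 0 + ∑ j : Fin l, b j.succ)) : ℕ) < b 0 := by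
          simpa using x.isLt
        have h1 := congrArg (fun σ : Equiv.Perm (Fin (b 0 + ∑ j : Fin l, b j.succ)) =>
          σ (Fin.castAdd _ x)) h
        simp only [permJoin_castAdd] at h1
        exact Fin.ext (by simpa using congrArg Fin.val h1)
      · apply Equiv.ext
        intro x
        have h1 := congrArg (fun σ : Equiv.Perm (Fin (b 0 + ∑ j : Fin l, b j.succ)) =>
          σ (Fin.natAdd _ x)) h
        simp only [permJoin_natAdd] at h1
        exact Fin.ext (by simpa using congrArg Fin.val h1)
    · -- surjectivity
      intro η hη
      rw [Finset.mem_filter] at hη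
      obtain ⟨-, hη⟩ := hη
      rw [fixesBlocks_intervalBlocks_iff] at hη
      have hlow : ∀ j : Fin (b 0 + ∑ j : Fin l, b j.succ), (j : ℕ) < b 0 → (η j : ℕ) < b 0 := by
        intro j hj
        have := hη 0 j (by rw [off_zero]; omega) (by rw [off_zero]; omega)
        rw [off_zero] at this
        omega
      have hhigh : ∀ j : Fin (b 0 + ∑ j : Fin l, b j.succ), b 0 ≤ (j : ℕ) → b 0 ≤ (η j : ℕ) := by
        intro j hj
        have hjs : (j : ℕ) - b 0 < ∑ j : Fin l, b j.succ := by have := j.isLt; omega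
        obtain ⟨i, hi1, hi2⟩ := off_cover (fun j => b j.succ) ((j : ℕ) - b 0) hjs
        have := hη i.succ j (by rw [off_succ]; omega) (by rw [off_succ]; omega)
        rw [off_succ] at this
        omega
      obtain ⟨p, q, hpq⟩ := perm_decomp η hlow hhigh
      refine ⟨(p, q), ?_, hpq.symm⟩
      rw [Finset.mem_product, Finset.mem_filter]
      refine ⟨Finset.mem_univ _, Finset.mem_univ _, ?_⟩
      show fixesBlocks (intervalBlocks (∑ j : Fin l, b j.succ) (fun j => b j.succ)) q
      rw [fixesBlocks_intervalBlocks_iff]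
      intro i x h1 h2
      have hx : (Fin.natAdd (b 0) x : ℕ) = b 0 + (x : ℕ) := rfl
      have := hη i.succ (Fin.natAdd (b 0) x) (by rw [off_succ]; omega)
        (by rw [off_succ]; omega)
      rw [off_succ, hpq] at this
      rw [permJoin_natAdd] at this
      have hx2 : ((Fin.natAdd (b 0) (q x) : Fin (b 0 + ∑ j : Fin l, b j.succ)) : ℕ)
          = b 0 + (q x : ℕ) := rfl
      omega
    · -- values
      rintro ⟨p, q⟩ hm
      rfl
  rw [step1, Finset.sum_congr rfl (fun pq _ => step2 pq), Finset.sum_mul_sum,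
    ← Finset.sum_product']
lemma hNC_zero (N : ℕ) (π : Finset (Finset (Fin 0))) : hNC N π = 1 := by
  rw [hNC]
  rw [Finset.filter_true_of_mem, Finset.filter_true_of_mem]
  · have hval : ∀ η : Equiv.Perm (Fin 0),
        (∑ f : Fin 0 → Fin N, ncMonomial fun j => f (η j)) =
          ∑ _f : Fin 0 → Fin N, (1 : FreeAlgebra ℚ (Fin N)) :=
      fun η => Finset.sum_congr rfl (fun f _ => by
        rw [ncMonomial, List.ofFn_zero, List.prod_nil])
    rw [Finset.sum_congr rfl (fun η _ => hval η)]
    simp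
  · intro f _
    intro j
    exact absurd j.isLt (by omega)
  · intro η _
    intro B hB j hj
    exact absurd j.isLt (by omega)

lemma hNC_intervalBlocks (N : ℕ) {l : ℕ} (b : Fin l → ℕ) (n : ℕ) (hsum : ∑ j, b j = n) :
    hNC N (intervalBlocks n b) = (List.ofFn fun i => hFull N (b i)).prod := by
  subst hsum
  induction l with
  | zero =>
    rw [List.ofFn_zero, List.prod_nil]
    exact hNC_zero N _
  | succ l ih =>
    have hn : ∑ j, b j = b 0 + ∑ j : Fin l, b j.succ := Fin.sum_univ_succ b
    rw [hn, hNC_split N b, ih (fun j => b j.succ), List.ofFn_succ, List.prod_cons]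
def cZ (g : List ℕ) (i j : ℕ) : ℤ :=
  (((g.take (j + 1)).sum : ℕ) : ℤ) - (((g.take i).sum : ℕ) : ℤ)

def ent (N : ℕ) (v : ℕ → FreeAlgebra ℚ (Fin N)) (g : List ℕ) (i j : ℕ) :
    FreeAlgebra ℚ (Fin N) :=
  if 0 ≤ cZ g i j then v (cZ g i j).toNat else 0

def detSum (N : ℕ) (v : ℕ → FreeAlgebra ℚ (Fin N)) (g : List ℕ) : FreeAlgebra ℚ (Fin N) :=
  ∑ ε : Equiv.Perm (Fin g.length),
    (((Equiv.Perm.sign ε : ℤ) : ℚ)) •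
      (List.ofFn fun i : Fin g.length => ent N v g (i : ℕ) ((ε i : ℕ))).prod

lemma cZ_cons_succ_succ (x : ℕ) (s : List ℕ) (i j : ℕ) :
    cZ (x :: s) (i + 1) (j + 1) = cZ s i j := by
  simp only [cZ, List.take_succ_cons, List.sum_cons]
  push_cast
  ring

lemma cZ_zero (g : List ℕ) (j : ℕ) : cZ g 0 j = ((g.take (j + 1)).sum : ℤ) := by
  simp [cZ]

lemma cZ_merge_zero (x y : ℕ) (t : List ℕ) (j : ℕ) :
    cZ (x :: y :: t) 0 (j + 1) = cZ ((x + y) :: t) 0 j := by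
  simp only [cZ, List.take_succ_cons, List.sum_cons, List.take_zero, List.sum_nil]
  push_cast
  ring

lemma cZ_merge_succ (x y : ℕ) (t : List ℕ) (i j : ℕ) :
    cZ (x :: y :: t) (i + 2) (j + 1) = cZ ((x + y) :: t) (i + 1) j := by
  simp only [cZ, List.take_succ_cons, List.sum_cons]
  push_cast
  ring

lemma cZ_one_zero (x : ℕ) (s : List ℕ) : cZ (x :: s) 1 0 = 0 := by
  simp [cZ]

lemma cZ_below (x y : ℕ) (t : List ℕ) (i : ℕ) (hy : 0 < y) :
    cZ (x :: y :: t) (i + 2) 0 < 0 := by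
  simp only [cZ, List.take_succ_cons, List.sum_cons, List.take_zero, List.sum_nil]
  omega

lemma ent_congr (N : ℕ) (v : ℕ → FreeAlgebra ℚ (Fin N)) {g g' : List ℕ} {i j i' j' : ℕ}
    (h : cZ g i j = cZ g' i' j') : ent N v g i j = ent N v g' i' j' := by
  rw [ent, ent, h]

lemma ent_head (N : ℕ) (v : ℕ → FreeAlgebra ℚ (Fin N)) (x : ℕ) (s : List ℕ) :
    ent N v (x :: s) 0 0 = v x := by
  have h : cZ (x :: s) 0 0 = (x : ℤ) := by simp [cZ]
  rw [ent, h, if_pos (Int.natCast_nonneg x)]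
  simp

lemma ent_one_zero (N : ℕ) (v : ℕ → FreeAlgebra ℚ (Fin N)) (x : ℕ) (s : List ℕ) :
    ent N v (x :: s) 1 0 = v 0 := by
  rw [ent, if_pos] <;> rw [cZ_one_zero] <;> simp

lemma ent_below (N : ℕ) (v : ℕ → FreeAlgebra ℚ (Fin N)) (x y : ℕ) (t : List ℕ) (i : ℕ)
    (hy : 0 < y) : ent N v (x :: y :: t) (i + 2) 0 = 0 := by
  rw [ent, if_neg]
  have := cZ_below x y t i hy
  omega
lemma detSum_nil (N : ℕ) (v : ℕ → FreeAlgebra ℚ (Fin N)) : detSum N v [] = 1 := by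
  have h : detSum N v [] = ∑ ε : Equiv.Perm (Fin 0),
      (((Equiv.Perm.sign ε : ℤ) : ℚ)) •
        (List.ofFn fun i : Fin 0 => ent N v [] (i : ℕ) ((ε i : ℕ))).prod := rfl
  rw [h, Fintype.sum_subsingleton _ 1]
  simp

lemma detSum_single (N : ℕ) (v : ℕ → FreeAlgebra ℚ (Fin N)) (a : ℕ) :
    detSum N v [a] = v a := by
  have h : detSum N v [a] = ∑ ε : Equiv.Perm (Fin 1),
      (((Equiv.Perm.sign ε : ℤ) : ℚ)) •
        (List.ofFn fun i : Fin 1 => ent N v [a] (i : ℕ) ((ε i : ℕ))).prod := rfl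
  rw [h, Fintype.sum_subsingleton _ 1]
  rw [List.ofFn_succ, List.ofFn_zero, List.prod_cons, List.prod_nil, mul_one]
  have h2 : ent N v [a] (((0 : Fin 1)) : ℕ) (((1 : Equiv.Perm (Fin 1)) 0 : Fin 1) : ℕ) = v a :=
    ent_head N v a []
  rw [h2]
  simp

section DecompInv
open Equiv Equiv.Perm

variable {n : ℕ}

lemma dinv_zero_zero (e : Perm (Fin (n + 1))) :
    ((decomposeFin.symm (0, e))⁻¹ : Perm (Fin (n + 2))) 0 = 0 := by
  rw [Perm.inv_eq_iff_eq, decomposeFin_symm_apply_zero]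

lemma dinv_zero_succ (e : Perm (Fin (n + 1))) (y : Fin (n + 1)) :
    ((decomposeFin.symm (0, e))⁻¹ : Perm (Fin (n + 2))) y.succ = (e⁻¹ y).succ := by
  rw [Perm.inv_eq_iff_eq, decomposeFin_symm_apply_succ, Equiv.swap_self, Equiv.refl_apply,
    Equiv.Perm.coe_inv, Equiv.apply_symm_apply]

lemma dinv_one_one (e : Perm (Fin (n + 1))) :
    ((decomposeFin.symm (1, e))⁻¹ : Perm (Fin (n + 2))) 1 = 0 := by
  rw [Perm.inv_eq_iff_eq, decomposeFin_symm_apply_zero]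

lemma dinv_one_zero (e : Perm (Fin (n + 1))) :
    ((decomposeFin.symm (1, e))⁻¹ : Perm (Fin (n + 2))) 0 = (e⁻¹ 0).succ := by
  rw [Perm.inv_eq_iff_eq, decomposeFin_symm_apply_succ, Equiv.Perm.coe_inv, Equiv.apply_symm_apply,
    Fin.succ_zero_eq_one, Equiv.swap_apply_right]

lemma dinv_one_succ_succ (e : Perm (Fin (n + 1))) (y : Fin n) :
    ((decomposeFin.symm (1, e))⁻¹ : Perm (Fin (n + 2))) y.succ.succ = (e⁻¹ y.succ).succ := by
  rw [Perm.inv_eq_iff_eq, decomposeFin_symm_apply_succ, Equiv.Perm.coe_inv, Equiv.apply_symm_apply]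
  rw [Equiv.swap_apply_of_ne_of_ne (Fin.succ_ne_zero _) ?_]
  rw [← Fin.succ_zero_eq_one]
  intro hc
  exact Fin.succ_ne_zero y (Fin.succ_injective _ hc)

lemma dinv_p (p : Fin (n + 1)) (e : Perm (Fin n)) :
    ((decomposeFin.symm (p, e))⁻¹ : Perm (Fin (n + 1))) p = 0 := by
  rw [Perm.inv_eq_iff_eq, decomposeFin_symm_apply_zero]

end DecompInv
def dF (N : ℕ) (v : ℕ → FreeAlgebra ℚ (Fin N)) (g : List ℕ) (L : ℕ)
    (ε : Equiv.Perm (Fin L)) : FreeAlgebra ℚ (Fin N) :=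
  ((Equiv.Perm.sign ε : ℤ) : ℚ) •
    (List.ofFn fun i : Fin L => ent N v g (i : ℕ) ((ε i : ℕ))).prod

lemma dF_zero_case (N : ℕ) (v : ℕ → FreeAlgebra ℚ (Fin N)) (x y : ℕ) (t : List ℕ)
    (n : ℕ) (e : Equiv.Perm (Fin (n + 1))) :
    dF N v (x :: y :: t) (n + 1 + 1) ((Equiv.Perm.decomposeFin.symm (0, e))⁻¹) =
      v x * dF N v (y :: t) (n + 1) e⁻¹ := by
  rw [dF, dF, Equiv.Perm.sign_inv, Equiv.Perm.sign_inv,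
    Equiv.Perm.decomposeFin.symm_sign, if_pos rfl, one_mul, List.ofFn_succ, List.prod_cons]
  have hhead : ent N v (x :: y :: t) (((0 : Fin (n + 1 + 1))) : ℕ)
      (((Equiv.Perm.decomposeFin.symm (0, e))⁻¹ (0 : Fin (n + 1 + 1)) : Fin (n + 1 + 1)) : ℕ)
      = v x := by
    rw [dinv_zero_zero]
    exact ent_head N v x (y :: t)
  rw [hhead]
  have htail : (List.ofFn fun i : Fin (n + 1) =>
      ent N v (x :: y :: t) ((i.succ : Fin (n + 1 + 1)) : ℕ)
        (((Equiv.Perm.decomposeFin.symm (0, e))⁻¹ i.succ : Fin (n + 1 + 1)) : ℕ)) =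
      List.ofFn fun i : Fin (n + 1) => ent N v (y :: t) (i : ℕ) ((e⁻¹ i : ℕ)) := by
    refine congrArg List.ofFn (funext fun i => ?_)
    rw [dinv_zero_succ, Fin.val_succ, Fin.val_succ]
    exact ent_congr N v (cZ_cons_succ_succ x (y :: t) (i : ℕ) ((e⁻¹ i : ℕ)))
  rw [htail, mul_smul_comm]

lemma dF_one_case (N : ℕ) (v : ℕ → FreeAlgebra ℚ (Fin N)) (hv0 : v 0 = 1)
    (x y : ℕ) (t : List ℕ) (n : ℕ) (e : Equiv.Perm (Fin (n + 1))) :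
    dF N v (x :: y :: t) (n + 1 + 1) ((Equiv.Perm.decomposeFin.symm (1, e))⁻¹) =
      - dF N v ((x + y) :: t) (n + 1) e⁻¹ := by
  rw [dF, dF, Equiv.Perm.sign_inv, Equiv.Perm.sign_inv,
    Equiv.Perm.decomposeFin.symm_sign, if_neg (by exact one_ne_zero)]
  rw [List.ofFn_succ, List.ofFn_succ, List.prod_cons, List.prod_cons]
  have hf0 : ent N v (x :: y :: t) (((0 : Fin (n + 1 + 1))) : ℕ)
      (((Equiv.Perm.decomposeFin.symm (1, e))⁻¹ (0 : Fin (n + 1 + 1)) : Fin (n + 1 + 1)) : ℕ)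
      = ent N v ((x + y) :: t) 0 ((e⁻¹ 0 : Fin (n + 1)) : ℕ) := by
    rw [dinv_one_zero]
    exact ent_congr N v (cZ_merge_zero x y t ((e⁻¹ 0 : Fin (n + 1)) : ℕ))
  have hf1 : ent N v (x :: y :: t) (((0 : Fin (n + 1)).succ : Fin (n + 1 + 1)) : ℕ)
      (((Equiv.Perm.decomposeFin.symm (1, e))⁻¹ (0 : Fin (n + 1)).succ : Fin (n + 1 + 1)) : ℕ)
      = 1 := by
    rw [Fin.succ_zero_eq_one, dinv_one_one]
    show ent N v (x :: y :: t) 1 0 = 1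
    rw [ent_one_zero, hv0]
  have htail : (List.ofFn fun i : Fin n =>
      ent N v (x :: y :: t) ((i.succ.succ : Fin (n + 1 + 1)) : ℕ)
        (((Equiv.Perm.decomposeFin.symm (1, e))⁻¹ i.succ.succ : Fin (n + 1 + 1)) : ℕ)) =
      List.ofFn fun i : Fin n =>
        ent N v ((x + y) :: t) ((i.succ : Fin (n + 1)) : ℕ) ((e⁻¹ i.succ : Fin (n + 1)) : ℕ) := by
    refine congrArg List.ofFn (funext fun i => ?_)
    rw [dinv_one_succ_succ]
    exact ent_congr N v (cZ_merge_succ x y t (i : ℕ) ((e⁻¹ i.succ : Fin (n + 1)) : ℕ))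
  rw [hf0, hf1, htail, one_mul]
  rw [Units.val_mul, Int.cast_mul]
  push_cast
  rw [neg_mul, one_mul, neg_smul]
  rw [List.ofFn_succ, List.prod_cons]
  rfl

lemma dF_rest_case (N : ℕ) (v : ℕ → FreeAlgebra ℚ (Fin N)) (x y : ℕ) (t : List ℕ)
    (hy : 0 < y) (n : ℕ) (p : Fin n) (e : Equiv.Perm (Fin (n + 1))) :
    dF N v (x :: y :: t) (n + 1 + 1) ((Equiv.Perm.decomposeFin.symm (p.succ.succ, e))⁻¹)
      = 0 := by
  have h0 : (0 : FreeAlgebra ℚ (Fin N)) ∈ List.ofFn (fun i : Fin (n + 1 + 1) =>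
      ent N v (x :: y :: t) (i : ℕ)
        (((Equiv.Perm.decomposeFin.symm (p.succ.succ, e))⁻¹ i : Fin (n + 1 + 1)) : ℕ)) := by
    rw [List.mem_ofFn]
    refine ⟨p.succ.succ, ?_⟩
    show ent N v (x :: y :: t) _ _ = 0
    rw [dinv_p]
    exact ent_below N v x y t (p : ℕ) hy
  rw [dF, List.prod_eq_zero h0, smul_zero]
lemma detSum_recur (N : ℕ) (v : ℕ → FreeAlgebra ℚ (Fin N)) (hv0 : v 0 = 1)
    (x y : ℕ) (t : List ℕ) (hy : 0 < y) :
    detSum N v (x :: y :: t) =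
      v x * detSum N v (y :: t) - detSum N v ((x + y) :: t) := by
  classical
  have Hzero : (∑ e : Equiv.Perm (Fin (t.length + 1)),
      dF N v (x :: y :: t) (t.length + 1 + 1) ((Equiv.Perm.decomposeFin.symm (0, e))⁻¹)) =
      v x * detSum N v (y :: t) := by
    rw [Finset.sum_congr rfl (fun e _ => dF_zero_case N v x y t t.length e), ← Finset.mul_sum]
    congr 1
    have hd : detSum N v (y :: t) =
        ∑ d : Equiv.Perm (Fin (t.length + 1)), dF N v (y :: t) (t.length + 1) d := rfl
    rw [hd]
    exact Equiv.sum_comp (Equiv.inv _) (dF N v (y :: t) (t.length + 1))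
  have Hone : (∑ e : Equiv.Perm (Fin (t.length + 1)),
      dF N v (x :: y :: t) (t.length + 1 + 1)
        ((Equiv.Perm.decomposeFin.symm ((1 : Fin (t.length + 1 + 1)), e))⁻¹)) =
      - detSum N v ((x + y) :: t) := by
    rw [Finset.sum_congr rfl (fun e _ => dF_one_case N v hv0 x y t t.length e)]
    rw [Finset.sum_neg_distrib]
    congr 1
    have hd : detSum N v ((x + y) :: t) =
        ∑ d : Equiv.Perm (Fin (t.length + 1)), dF N v ((x + y) :: t) (t.length + 1) d := rfl
    rw [hd]
    exact Equiv.sum_comp (Equiv.inv _) (dF N v ((x + y) :: t) (t.length + 1))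
  have Hrest : (∑ p : Fin t.length, ∑ e : Equiv.Perm (Fin (t.length + 1)),
      dF N v (x :: y :: t) (t.length + 1 + 1)
        ((Equiv.Perm.decomposeFin.symm (p.succ.succ, e))⁻¹)) = 0 := by
    rw [Finset.sum_congr rfl (fun p _ => Finset.sum_congr rfl
      (fun e _ => dF_rest_case N v x y t hy t.length p e))]
    simp
  have hdet : detSum N v (x :: y :: t) =
      ∑ ε : Equiv.Perm (Fin (t.length + 1 + 1)), dF N v (x :: y :: t) (t.length + 1 + 1) ε :=
    rfl
  rw [hdet]
  rw [← Equiv.sum_comp (Equiv.inv (Equiv.Perm (Fin (t.length + 1 + 1))))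
    (dF N v (x :: y :: t) (t.length + 1 + 1))]
  rw [show (fun σ : Equiv.Perm (Fin (t.length + 1 + 1)) =>
      dF N v (x :: y :: t) (t.length + 1 + 1) ((Equiv.inv _) σ)) =
    (fun σ => dF N v (x :: y :: t) (t.length + 1 + 1) σ⁻¹) from rfl]
  rw [← Equiv.sum_comp Equiv.Perm.decomposeFin.symm
    (fun σ : Equiv.Perm (Fin (t.length + 1 + 1)) =>
      dF N v (x :: y :: t) (t.length + 1 + 1) σ⁻¹)]
  rw [Fintype.sum_prod_type, Fin.sum_univ_succ, Fin.sum_univ_succ, Fin.succ_zero_eq_one]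
  rw [Hzero, Hone, Hrest, add_zero, ← sub_eq_add_neg]
lemma detSum_mul (N : ℕ) (v : ℕ → FreeAlgebra ℚ (Fin N)) (hv0 : v 0 = 1) :
    ∀ (L : ℕ) (a b : List ℕ), a.length ≤ L → a ≠ [] → b ≠ [] →
      (∀ z ∈ a, 0 < z) → (∀ z ∈ b, 0 < z) →
      detSum N v (a ++ b) +
        detSum N v (a.dropLast ++ ((a.getLastD 0 + b.headD 0) :: b.tail)) =
      detSum N v a * detSum N v b := by
  intro L
  induction L with
  | zero =>
    intro a b hL ha _ _ _
    cases a with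
    | nil => exact absurd rfl ha
    | cons x a' => simp at hL
  | succ L ih =>
    intro a b hL ha hb hpa hpb
    obtain ⟨w, s, rfl⟩ : ∃ w s, b = w :: s := by
      cases b with
      | nil => exact absurd rfl hb
      | cons w s => exact ⟨w, s, rfl⟩
    have hw : 0 < w := hpb w (by simp)
    cases a with
    | nil => exact absurd rfl ha
    | cons x a' =>
    cases a' with
    | nil =>
      show detSum N v (x :: w :: s) + detSum N v ((x + w) :: s) =
        detSum N v [x] * detSum N v (w :: s)
      rw [detSum_recur N v hv0 x w s hw, detSum_single, sub_add_cancel]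
    | cons c r =>
    have hc : 0 < c := hpa c (by simp)
    cases r with
    | nil =>
      show detSum N v (x :: c :: w :: s) + detSum N v (x :: (c + w) :: s) =
        detSum N v [x, c] * detSum N v (w :: s)
      have e1 : detSum N v (c :: w :: s) + detSum N v ((c + w) :: s) =
          v c * detSum N v (w :: s) := by
        have := ih [c] (w :: s) (by simp at hL ⊢; omega) (by simp) (by simp)
          (fun z hz => by simp at hz; omega) hpb
        rw [detSum_single] at this
        exact this
      have e2 : detSum N v ((x + c) :: w :: s) + detSum N v ((x + c + w) :: s) =
          v (x + c) * detSum N v (w :: s) := by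
        have := ih [x + c] (w :: s) (by simp at hL ⊢; omega) (by simp) (by simp)
          (fun z hz => by simp at hz; omega) hpb
        rw [detSum_single] at this
        exact this
      have hsingle : detSum N v [x, c] = v x * v c - v (x + c) := by
        rw [detSum_recur N v hv0 x c [] hc, detSum_single, detSum_single]
      rw [detSum_recur N v hv0 x c (w :: s) hc,
        detSum_recur N v hv0 x (c + w) s (by omega), hsingle, ← Nat.add_assoc]
      calc v x * detSum N v (c :: w :: s) - detSum N v ((x + c) :: w :: s) +
            (v x * detSum N v ((c + w) :: s) - detSum N v ((x + c + w) :: s))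
          = v x * (detSum N v (c :: w :: s) + detSum N v ((c + w) :: s)) -
            (detSum N v ((x + c) :: w :: s) + detSum N v ((x + c + w) :: s)) := by
            noncomm_ring
        _ = v x * (v c * detSum N v (w :: s)) - v (x + c) * detSum N v (w :: s) := by
            rw [e1, e2]
        _ = (v x * v c - v (x + c)) * detSum N v (w :: s) := by noncomm_ring
    | cons d r' =>
      have hgl1 : (x :: c :: d :: r').getLastD 0 = (c :: d :: r').getLastD 0 := by
        simp [List.getLastD_cons]
      have hgl2 : ((x + c) :: d :: r').getLastD 0 = (c :: d :: r').getLastD 0 := by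
        simp [List.getLastD_cons]
      -- near-concatenation lists
      have hnear1 : (x :: c :: d :: r').dropLast ++
          (((x :: c :: d :: r').getLastD 0 + w) :: s) =
          x :: c :: ((d :: r').dropLast ++ (((c :: d :: r').getLastD 0 + w) :: s)) := by
        rw [hgl1]
        rfl
      have hnear2 : ((x + c) :: d :: r').dropLast ++
          ((((x + c) :: d :: r').getLastD 0 + w) :: s) =
          (x + c) :: ((d :: r').dropLast ++ (((c :: d :: r').getLastD 0 + w) :: s)) := by
        rw [hgl2]
        rfl
      have hnear3 : (c :: d :: r').dropLast ++ (((c :: d :: r').getLastD 0 + w) :: s) =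
          c :: ((d :: r').dropLast ++ (((c :: d :: r').getLastD 0 + w) :: s)) := rfl
      have e1 : detSum N v ((c :: d :: r') ++ (w :: s)) +
          detSum N v ((c :: d :: r').dropLast ++ (((c :: d :: r').getLastD 0 + w) :: s)) =
          detSum N v (c :: d :: r') * detSum N v (w :: s) := by
        have := ih (c :: d :: r') (w :: s) (by simp at hL ⊢; omega) (by simp) (by simp)
          (fun z hz => hpa z (by simp at hz ⊢; tauto)) hpb
        exact this
      have e2 : detSum N v (((x + c) :: d :: r') ++ (w :: s)) +
          detSum N v (((x + c) :: d :: r').dropLast ++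
            ((((x + c) :: d :: r').getLastD 0 + w) :: s)) =
          detSum N v ((x + c) :: d :: r') * detSum N v (w :: s) := by
        have := ih ((x + c) :: d :: r') (w :: s) (by simp at hL ⊢; omega) (by simp) (by simp)
          (fun z hz => by
            simp at hz
            rcases hz with h | h | h
            · omega
            · exact h ▸ hpa d (by simp)
            · exact hpa z (by simp; tauto)) hpb
        exact this
      rw [hnear3] at e1
      rw [hnear2] at e2
      simp only [List.cons_append, List.headD_cons, List.tail_cons] at e1 e2 ⊢
      rw [hnear1, detSum_recur N v hv0 x c (d :: (r' ++ (w :: s))) hc,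
        detSum_recur N v hv0 x c ((d :: r').dropLast ++
          (((c :: d :: r').getLastD 0 + w) :: s)) hc,
        detSum_recur N v hv0 x c (d :: r') hc]
      rw [sub_add_sub_comm, ← mul_add, e1, e2, sub_mul, ← mul_assoc]
lemma sum_ge_length (l : List ℕ) (h : ∀ z ∈ l, 0 < z) : l.length ≤ l.sum := by
  induction l with
  | nil => simp
  | cons a t ih =>
    have ha := h a (by simp)
    have := ih (fun z hz => h z (by simp [hz]))
    simp only [List.length_cons, List.sum_cons]
    omega

lemma ribbonOuter_nil : ribbonOuter [] = [] := rfl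

lemma ribbonOuter_length (α : List ℕ) : (ribbonOuter α).length = α.length := by
  induction α with
  | nil => rfl
  | cons a rest ih =>
    cases hre : ribbonOuter rest with
    | nil =>
      have h0 : ribbonOuter (a :: rest) = [a] := by rw [ribbonOuter, hre]
      rw [hre] at ih
      rw [h0]
      simp only [List.length_cons, List.length_nil] at ih ⊢
      omega
    | cons b t =>
      have h0 : ribbonOuter (a :: rest) = (a + b - 1) :: b :: t := by rw [ribbonOuter, hre]
      rw [hre] at ih
      rw [h0]
      simp only [List.length_cons] at ih ⊢
      omega

lemma ribbonOuter_getD (α : List ℕ) (hpos : ∀ z ∈ α, 0 < z) :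
    ∀ i < α.length, (((ribbonOuter α).getD i 0 : ℕ) : ℤ) =
      (((α.drop i).sum : ℕ) : ℤ) - (α.length : ℤ) + 1 + i := by
  induction α with
  | nil => intro i hi; simp at hi
  | cons a rest ih =>
    have hrestpos : ∀ z ∈ rest, 0 < z := fun z hz => hpos z (by simp [hz])
    intro i hi
    cases hre : ribbonOuter rest with
    | nil =>
      have h0 : ribbonOuter (a :: rest) = [a] := by rw [ribbonOuter, hre]
      have hlen : rest.length = 0 := by rw [← ribbonOuter_length, hre]; rfl
      have hre2 : rest = [] := List.length_eq_zero_iff.1 hlen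
      subst hre2
      have hi0 : i = 0 := by simp at hi; omega
      subst hi0
      rw [h0]
      simp
    | cons b t =>
      have h0 : ribbonOuter (a :: rest) = (a + b - 1) :: b :: t := by rw [ribbonOuter, hre]
      rw [h0]
      have IH := ih hrestpos
      rw [hre] at IH
      have hrlen : rest.length ≠ 0 := by
        rw [← ribbonOuter_length, hre]; simp
      have hb := IH 0 (by omega)
      simp only [List.getD_cons_zero, List.drop_zero] at hb
      have hsum := sum_ge_length rest hrestpos
      have hb1 : 1 ≤ b := by omega
      match i with
      | 0 =>
        simp only [List.getD_cons_zero, List.drop_zero, List.sum_cons, List.length_cons]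
        have hcast : ((a + b - 1 : ℕ) : ℤ) = (a : ℤ) + (b : ℤ) - 1 := by omega
        rw [hcast]
        omega
      | (i' + 1) =>
        simp only [List.getD_cons_succ, List.drop_succ_cons, List.length_cons]
        have := IH i' (by simp at hi; omega)
        omega

lemma ribbonOuter_getD_pos (α : List ℕ) (hpos : ∀ z ∈ α, 0 < z) :
    ∀ i < α.length, 1 ≤ (ribbonOuter α).getD i 0 := by
  intro i hi
  have h1 := ribbonOuter_getD α hpos i hi
  have h2 := sum_ge_length (α.drop i) (fun z hz => hpos z (List.mem_of_mem_drop hz))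
  rw [List.length_drop] at h2
  omega

lemma ribbonInner_length (α : List ℕ) : (ribbonInner α).length = α.length - 1 := by
  rw [ribbonInner, List.length_map, List.length_tail, ribbonOuter_length]

lemma ribbonInner_getD (α : List ℕ) (j : ℕ) (hj : j < α.length - 1) :
    (ribbonInner α).getD j 0 = (ribbonOuter α).getD (j + 1) 0 - 1 := by
  have hlen : j < (ribbonInner α).length := by rw [ribbonInner_length]; omega
  have hlen2 : j + 1 < (ribbonOuter α).length := by rw [ribbonOuter_length]; omega
  rw [List.getD_eq_getElem _ _ hlen, List.getD_eq_getElem _ _ hlen2]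
  simp only [show ribbonInner α = (ribbonOuter α).tail.map (· - 1) from rfl,
    List.getElem_map, List.getElem_tail]

lemma ribbonInner_getD_zero (α : List ℕ) (j : ℕ) (hj : α.length - 1 ≤ j) :
    (ribbonInner α).getD j 0 = 0 := by
  apply List.getD_eq_default
  rw [ribbonInner_length]
  omega
lemma betaInt_eq_cZ (α : List ℕ) (hpos : ∀ z ∈ α, 0 < z)
    (ε : Equiv.Perm (Fin (ribbonOuter α).length)) (i : Fin (ribbonOuter α).length) :
    betaInt (ribbonOuter α) (ribbonInner α) ε i = cZ α (i : ℕ) ((ε i : ℕ)) := by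
  have hL : (ribbonOuter α).length = α.length := ribbonOuter_length α
  have hi : (i : ℕ) < α.length := by have := i.isLt; omega
  have hei : ((ε i : Fin (ribbonOuter α).length) : ℕ) < α.length := by
    have := (ε i).isLt; omega
  have hget : (ribbonOuter α).get i = (ribbonOuter α).getD (i : ℕ) 0 := by
    rw [List.get_eq_getElem, List.getD_eq_getElem _ _ i.isLt]
  have h1 := ribbonOuter_getD α hpos (i : ℕ) hi
  have htd1 := List.sum_take_add_sum_drop α (i : ℕ)
  have htd2 := List.sum_take_add_sum_drop α ((ε i : ℕ) + 1)
  rw [betaInt, hget, cZ]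
  by_cases hcase : (ε i : ℕ) = α.length - 1
  · have hmu := ribbonInner_getD_zero α (ε i : ℕ) (by omega)
    have hdrop : α.drop ((ε i : ℕ) + 1) = [] := by
      apply List.drop_eq_nil_of_le
      omega
    rw [hmu]
    rw [hdrop] at htd2
    simp only [List.sum_nil] at htd2
    omega
  · have hmu1 := ribbonInner_getD α (ε i : ℕ) (by omega)
    have h2 := ribbonOuter_getD α hpos ((ε i : ℕ) + 1) (by omega)
    have h3 := ribbonOuter_getD_pos α hpos ((ε i : ℕ) + 1) (by omega)
    rw [hmu1]
    have hcast : (((ribbonOuter α).getD ((ε i : ℕ) + 1) 0 - 1 : ℕ) : ℤ) =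
        (((ribbonOuter α).getD ((ε i : ℕ) + 1) 0 : ℕ) : ℤ) - 1 := by omega
    rw [hcast]
    omega

lemma sum_cZ (α : List ℕ) (L : ℕ) (hL : L = α.length) (ε : Equiv.Perm (Fin L)) :
    ∑ i : Fin L, cZ α (i : ℕ) ((ε i : ℕ)) = (α.sum : ℤ) := by
  subst hL
  simp only [cZ]
  rw [Finset.sum_sub_distrib]
  rw [Equiv.sum_comp ε (fun j : Fin α.length => (((α.take ((j : ℕ) + 1)).sum : ℕ) : ℤ))]
  have h1 : ∀ n : ℕ, (∑ i : Fin n, ((((α.take ((i : ℕ) + 1)).sum : ℕ) : ℤ))) -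
      (∑ i : Fin n, (((α.take (i : ℕ)).sum : ℕ) : ℤ)) =
      ((α.take n).sum : ℤ) - ((α.take 0).sum : ℤ) := by
    intro n
    rw [← Finset.sum_sub_distrib, Fin.sum_univ_eq_sum_range
      (fun j => ((((α.take (j + 1)).sum : ℕ) : ℤ)) - (((α.take j).sum : ℕ) : ℤ)) n]
    exact Finset.sum_range_sub (fun j => (((α.take j).sum : ℕ) : ℤ)) n
  rw [h1 α.length]
  rw [List.take_length]
  simp

def Hq (N : ℕ) (k : ℕ) : FreeAlgebra ℚ (Fin N) :=
  (1 / (k.factorial : ℚ)) • hFull N k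

lemma hFull_zero (N : ℕ) : hFull N 0 = 1 := by
  rw [hFull, Finset.filter_true_of_mem (fun f _ => by intro j; exact absurd j.isLt (by omega))]
  have hval : ∀ η : Equiv.Perm (Fin 0),
      (∑ f : Fin 0 → Fin N, ncMonomial fun j => f (η j)) =
        ∑ _f : Fin 0 → Fin N, (1 : FreeAlgebra ℚ (Fin N)) :=
    fun η => Finset.sum_congr rfl (fun f _ => by
      rw [ncMonomial, List.ofFn_zero, List.prod_nil])
  rw [Finset.sum_congr rfl (fun η _ => hval η)]
  simp

lemma Hq_zero (N : ℕ) : Hq N 0 = 1 := by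
  rw [Hq, hFull_zero]
  norm_num

lemma ofFn_smul_prod (N : ℕ) : ∀ {l : ℕ} (q : Fin l → ℚ) (A : Fin l → FreeAlgebra ℚ (Fin N)),
    (List.ofFn fun i => q i • A i).prod = (∏ i, q i) • (List.ofFn A).prod := by
  intro l
  induction l with
  | zero => intro q A; simp
  | succ l ih =>
    intro q A
    rw [List.ofFn_succ, List.ofFn_succ, List.prod_cons, List.prod_cons,
      ih (fun i => q i.succ) (fun i => A i.succ), Fin.prod_univ_succ]
    rw [smul_mul_assoc, mul_smul_comm, smul_smul]

lemma detSum_transport (N : ℕ) (v : ℕ → FreeAlgebra ℚ (Fin N)) (α : List ℕ) (L : ℕ)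
    (hL : L = α.length) :
    (∑ ε : Equiv.Perm (Fin L), (((Equiv.Perm.sign ε : ℤ) : ℚ)) •
      (List.ofFn fun i : Fin L => ent N v α (i : ℕ) ((ε i : ℕ))).prod) = detSum N v α := by
  subst hL
  rfl
lemma applyMap_id {n : ℕ} (π : Finset (Finset (Fin n))) : applyMap id π = π := by
  rw [applyMap]
  have h : (fun B : Finset (Fin n) => B.image id) = id := funext fun B => Finset.image_id
  rw [h, Finset.image_id]

lemma ribbonNC_eq_detSum (N : ℕ) (n : ℕ) (α : List ℕ) (hpos : ∀ z ∈ α, 0 < z)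
    (hsum : α.sum = n) : ribbonNC N n α = detSum N (Hq N) α := by
  rw [ribbonNC, sNC,
    ← detSum_transport N (Hq N) α (ribbonOuter α).length (ribbonOuter_length α)]
  apply Finset.sum_congr rfl
  intro ε _
  by_cases h : ∀ i, 0 ≤ betaInt (ribbonOuter α) (ribbonInner α) ε i
  · rw [if_pos h]
    set b : Fin (ribbonOuter α).length → ℕ :=
      fun i => (betaInt (ribbonOuter α) (ribbonInner α) ε i).toNat with hb
    have hbi : ∀ i, (betaInt (ribbonOuter α) (ribbonInner α) ε i).toNat = b i :=
      fun i => rfl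
    have hbsum : ∑ j, b j = n := by
      have h1 : ((∑ j, b j : ℕ) : ℤ) = ∑ j : Fin (ribbonOuter α).length, ((b j : ℕ) : ℤ) :=
        Nat.cast_sum _ _
      have h2 : ∀ j, ((b j : ℕ) : ℤ) = cZ α (j : ℕ) ((ε j : ℕ)) := fun j => by
        rw [hb]
        rw [Int.toNat_of_nonneg (h j)]
        exact betaInt_eq_cZ α hpos ε j
      have h3 := sum_cZ α (ribbonOuter α).length (ribbonOuter_length α) ε
      have h4 : ((∑ j, b j : ℕ) : ℤ) = (n : ℤ) := by
        rw [h1, Finset.sum_congr rfl (fun j _ => h2 j), h3, hsum]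
      exact_mod_cast h4
    have hent : ∀ i : Fin (ribbonOuter α).length,
        ent N (Hq N) α (i : ℕ) ((ε i : ℕ)) = (1 / ((b i).factorial : ℚ)) • hFull N (b i) := by
      intro i
      have hc := betaInt_eq_cZ α hpos ε i
      rw [ent, if_pos (by rw [← hc]; exact h i)]
      rw [show (cZ α (i : ℕ) ((ε i : ℕ))).toNat = b i from by rw [hb, ← hc], Hq]
    have hlist : (List.ofFn fun i : Fin (ribbonOuter α).length =>
        ent N (Hq N) α (i : ℕ) ((ε i : ℕ))) =
        List.ofFn fun i => (1 / ((b i).factorial : ℚ)) • hFull N (b i) :=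
      congrArg List.ofFn (funext hent)
    rw [applyMap_id, hNC_intervalBlocks N b n hbsum, hlist, ofFn_smul_prod, mul_smul]
  · rw [if_neg h]
    push_neg at h
    obtain ⟨i₀, hi₀⟩ := h
    have hz : ent N (Hq N) α ((i₀ : Fin (ribbonOuter α).length) : ℕ) ((ε i₀ : ℕ)) = 0 := by
      rw [ent, if_neg]
      rw [← betaInt_eq_cZ α hpos ε i₀]
      omega
    rw [List.prod_eq_zero (List.mem_ofFn.2 ⟨i₀, hz⟩), smul_zero]

/-- `r_{[α]} · r_{[β]} = r_{[α·β]} + r_{[α⊙β]}`, where `α·β` is the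
concatenation and `α⊙β = (α_1, …, α_{k−1}, α_k + β_1, β_2, …, β_p)` the near
concatenation of compositions. -/
theorem ribbon_product_rule (N n m : ℕ) (hN : 0 < N) (a b : List ℕ)
    (ha : ∀ x ∈ a, 0 < x) (hb : ∀ x ∈ b, 0 < x)
    (hasum : a.sum = n) (hbsum : b.sum = m) (hn : 1 ≤ n) (hm : 1 ≤ m) :
    ribbonNC N n a * ribbonNC N m b =
      ribbonNC N (n + m) (a ++ b) +
        ribbonNC N (n + m) (a.dropLast ++ ((a.getLastD 0 + b.headD 0) :: b.tail)) := by
  classical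
  have hane : a ≠ [] := by rintro rfl; simp at hasum; omega
  have hbne : b ≠ [] := by rintro rfl; simp at hbsum; omega
  obtain ⟨w, s, rfl⟩ : ∃ w s, b = w :: s := by
    cases b with
    | nil => exact absurd rfl hbne
    | cons w s => exact ⟨w, s, rfl⟩
  have hasum' : a.dropLast.sum + a.getLastD 0 = a.sum := by
    conv_rhs => rw [← List.dropLast_append_getLast hane]
    rw [List.sum_append, List.getLastD_eq_getLast?, List.getLast?_eq_getLast hane]
    simp
  have hcpos : ∀ z ∈ a.dropLast ++ ((a.getLastD 0 + (w :: s).headD 0) :: (w :: s).tail),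
      0 < z := by
    intro z hz
    rw [List.mem_append] at hz
    rcases hz with hz | hz
    · exact ha z (List.dropLast_subset a hz)
    · rw [List.mem_cons] at hz
      rcases hz with rfl | hz
      · have := hb w (by simp)
        simp only [List.headD_cons]
        omega
      · exact hb z (by simp at hz ⊢; tauto)
  have hcsum : (a.dropLast ++ ((a.getLastD 0 + (w :: s).headD 0) :: (w :: s).tail)).sum
      = n + m := by
    rw [List.sum_append, List.sum_cons, List.headD_cons, List.tail_cons]
    have : (w :: s).sum = w + s.sum := List.sum_cons
    omega
  have habsum : (a ++ w :: s).sum = n + m := by rw [List.sum_append]; omega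
  have habpos : ∀ z ∈ a ++ w :: s, 0 < z := by
    intro z hz
    rw [List.mem_append] at hz
    rcases hz with hz | hz
    · exact ha z hz
    · exact hb z hz
  rw [ribbonNC_eq_detSum N n a ha hasum, ribbonNC_eq_detSum N m (w :: s) hb hbsum,
    ribbonNC_eq_detSum N (n + m) (a ++ w :: s) habpos habsum,
    ribbonNC_eq_detSum N (n + m) _ hcpos hcsum]
  exact (detSum_mul N (Hq N) (Hq_zero N) a.length a (w :: s) le_rfl hane (by simp)
    ha hb).symm

end NCSymPaper
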